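/- arXiv:0904.0226 — 2 statements merged into one kernel-verified Lean document; each statement's English description precedes it below -/
import Mathlib

section
/- For any constant κ ∈ (0,1), the function η(ε) = (1 − κ·Q⁻¹(ε))·(1 − ε) is strictly concave on (0,1), i.e., its second derivative is strictly negative for all ε ∈ (0,1). -/
/-!
From `Q' = -φ` one gets `(Q⁻¹)' = -1 / φ(Q⁻¹)`, and then `(φ ∘ Q⁻¹)' = Q⁻¹` because
`φ'(x) = -x φ(x)`. Writing `q = Q⁻¹(ε)`, so that `1 - ε = 1 - Q(q)`, this gives
`η''(ε) = -κ (q (1 - Q(q)) + 2 φ(q)) / φ(q)²`. The bracket is positive because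
`q (1 - Q(q)) + φ(q) = ∫_{t ≤ q} (q - t) φ(t) dt ≥ 0`, again by `φ' = -t φ`.
-/

open Real MeasureTheory

/-- The Gaussian tail function `Q(x) = ∫_x^∞ (1/√(2π)) e^{-t²/2} dt`. -/
noncomputable def gaussQ (x : ℝ) : ℝ :=
  ∫ t in Set.Ioi x, (Real.sqrt (2 * Real.pi))⁻¹ * Real.exp (-t ^ 2 / 2)

open Set Filter Topology

noncomputable def gaussPDF (t : ℝ) : ℝ := (√(2 * π))⁻¹ * exp (-t ^ 2 / 2)

lemma gaussPDF_eq_gaussianPDFReal : gaussPDF = ProbabilityTheory.gaussianPDFReal 0 1 := by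
  ext t
  simp [gaussPDF, ProbabilityTheory.gaussianPDFReal]

lemma gaussPDF_pos (t : ℝ) : 0 < gaussPDF t := by
  rw [gaussPDF_eq_gaussianPDFReal]
  exact ProbabilityTheory.gaussianPDFReal_pos _ _ _ one_ne_zero

lemma integrable_gaussPDF : Integrable gaussPDF :=
  gaussPDF_eq_gaussianPDFReal ▸ ProbabilityTheory.integrable_gaussianPDFReal 0 1

lemma integral_gaussPDF : ∫ t, gaussPDF t = 1 := by
  rw [gaussPDF_eq_gaussianPDFReal]
  exact ProbabilityTheory.integral_gaussianPDFReal_eq_one 0 one_ne_zero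

lemma hasDerivAt_gaussPDF (x : ℝ) : HasDerivAt gaussPDF (-x * gaussPDF x) x := by
  have h : HasDerivAt (fun t : ℝ => -t ^ 2 / 2) (-x) x :=
    ((hasDerivAt_pow 2 x).fun_neg.div_const 2).congr_deriv (by ring)
  exact (h.exp.const_mul (√(2 * π))⁻¹).congr_deriv (by rw [gaussPDF]; ring)

lemma integrable_neg_mul_gaussPDF : Integrable fun t => -t * gaussPDF t := by
  convert (integrable_mul_exp_neg_mul_sq (b := 1 / 2) one_half_pos).const_mul (-(√(2 * π))⁻¹)
    using 2 with t
  simp only [gaussPDF]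
  ring_nf

lemma integral_Iic_neg_mul_gaussPDF (x : ℝ) : ∫ t in Iic x, -t * gaussPDF t = gaussPDF x := by
  have hderiv : ∀ t ∈ Iic x, HasDerivAt gaussPDF (-t * gaussPDF t) t :=
    fun t _ => hasDerivAt_gaussPDF t
  have hint := integrable_neg_mul_gaussPDF.integrableOn (s := Iic x)
  rw [integral_Iic_of_hasDerivAt_of_tendsto' hderiv hint
    (tendsto_zero_of_hasDerivAt_of_integrableOn_Iic hderiv hint integrable_gaussPDF.integrableOn),
    sub_zero]

lemma one_sub_gaussQ (x : ℝ) : 1 - gaussQ x = ∫ t in Iic x, gaussPDF t := by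
  have h := intervalIntegral.integral_Iic_add_Ioi (b := x)
    integrable_gaussPDF.integrableOn integrable_gaussPDF.integrableOn
  have hQ : gaussQ x = ∫ t in Ioi x, gaussPDF t := rfl
  rw [integral_gaussPDF] at h
  linarith

lemma hasDerivAt_gaussQ (x : ℝ) : HasDerivAt gaussQ (-gaussPDF x) x := by
  have hQ : ∀ y, gaussQ y = gaussQ 0 - ∫ t in (0)..y, gaussPDF t := by
    intro y
    rw [← intervalIntegral.integral_Iic_sub_Iic integrable_gaussPDF.integrableOn
      integrable_gaussPDF.integrableOn]
    linarith [one_sub_gaussQ y, one_sub_gaussQ 0]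
  have hI : HasDerivAt (fun y => ∫ t in (0)..y, gaussPDF t) (gaussPDF x) x :=
    intervalIntegral.integral_hasDerivAt_right integrable_gaussPDF.intervalIntegrable
      integrable_gaussPDF.aestronglyMeasurable.stronglyMeasurableAtFilter
      (hasDerivAt_gaussPDF x).continuousAt
  rw [funext hQ]
  simpa using hI.const_sub _

lemma gaussQ_strictAnti : StrictAnti gaussQ :=
  strictAnti_of_hasDerivAt_neg hasDerivAt_gaussQ fun x => neg_neg_of_pos (gaussPDF_pos x)

lemma gaussQ_mem_Ioo (x : ℝ) : gaussQ x ∈ Ioo 0 1 := by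
  have hpos : ∀ s : Set ℝ, volume s ≠ 0 → 0 < ∫ t in s, gaussPDF t := by
    intro s hs
    rw [integral_pos_iff_support_of_nonneg (fun t => (gaussPDF_pos t).le)
      integrable_gaussPDF.integrableOn]
    simpa [Function.support, (gaussPDF_pos _).ne'] using hs.bot_lt
  refine ⟨hpos _ (by simp), ?_⟩
  have := hpos (Iic x) (by simp)
  rw [← one_sub_gaussQ] at this
  linarith

lemma mul_one_sub_gaussQ_add_gaussPDF_nonneg (x : ℝ) : 0 ≤ x * (1 - gaussQ x) + gaussPDF x := by
  have hint := integrable_neg_mul_gaussPDF.integrableOn (s := Iic x)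
  have h : x * (1 - gaussQ x) + gaussPDF x = ∫ t in Iic x, (x - t) * gaussPDF t := by
    rw [one_sub_gaussQ, ← integral_Iic_neg_mul_gaussPDF, ← integral_const_mul,
      ← integral_add ((integrable_gaussPDF.const_mul x).integrableOn) hint]
    simp only [sub_eq_add_neg, add_mul, neg_mul]
  rw [h]
  refine setIntegral_nonneg measurableSet_Iic fun t ht => ?_
  exact mul_nonneg (sub_nonneg.2 ht) (gaussPDF_pos t).le

section LeftInverse

variable {Qinv : ℝ → ℝ} {ε : ℝ}

lemma continuousAt_of_leftInverse_gaussQ (hleft : ∀ x, Qinv (gaussQ x) = x)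
    (hright : ∀ ε ∈ Ioo (0 : ℝ) 1, gaussQ (Qinv ε) = ε) (hε : ε ∈ Ioo (0 : ℝ) 1) :
    ContinuousAt Qinv ε := by
  have hmono : StrictMonoOn (fun y => -Qinv y) (Ioo 0 1) := fun a ha b hb hab => by
    rw [← hright a ha, ← hright b hb] at hab
    exact neg_lt_neg (gaussQ_strictAnti.lt_iff_gt.mp hab)
  have himage : (fun y => -Qinv y) '' Ioo 0 1 = univ :=
    eq_univ_of_forall fun z => ⟨gaussQ (-z), gaussQ_mem_Ioo (-z), by simp [hleft]⟩
  simpa using (hmono.continuousAt_of_image_mem_nhds (isOpen_Ioo.mem_nhds hε)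
    (by rw [himage]; exact univ_mem)).fun_neg

lemma hasDerivAt_of_leftInverse_gaussQ (hleft : ∀ x, Qinv (gaussQ x) = x)
    (hright : ∀ ε ∈ Ioo (0 : ℝ) 1, gaussQ (Qinv ε) = ε) (hε : ε ∈ Ioo (0 : ℝ) 1) :
    HasDerivAt Qinv (-(gaussPDF (Qinv ε))⁻¹) ε := by
  rw [← inv_neg]
  exact (hasDerivAt_gaussQ (Qinv ε)).of_local_left_inverse
    (continuousAt_of_leftInverse_gaussQ hleft hright hε) (neg_ne_zero.2 (gaussPDF_pos _).ne')
    (eventually_of_mem (isOpen_Ioo.mem_nhds hε) hright)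

lemma hasDerivAt_gaussPDF_comp_of_leftInverse_gaussQ (hleft : ∀ x, Qinv (gaussQ x) = x)
    (hright : ∀ ε ∈ Ioo (0 : ℝ) 1, gaussQ (Qinv ε) = ε) (hε : ε ∈ Ioo (0 : ℝ) 1) :
    HasDerivAt (fun ε => gaussPDF (Qinv ε)) (Qinv ε) ε :=
  ((hasDerivAt_gaussPDF (Qinv ε)).comp ε
    (hasDerivAt_of_leftInverse_gaussQ hleft hright hε)).congr_deriv
    (by field_simp [(gaussPDF_pos (Qinv ε)).ne'])

noncomputable def eta (κ : ℝ) (Qinv : ℝ → ℝ) (ε : ℝ) : ℝ := (1 - κ * Qinv ε) * (1 - ε)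

lemma hasDerivAt_eta (hleft : ∀ x, Qinv (gaussQ x) = x)
    (hright : ∀ ε ∈ Ioo (0 : ℝ) 1, gaussQ (Qinv ε) = ε) (κ : ℝ) (hε : ε ∈ Ioo (0 : ℝ) 1) :
    HasDerivAt (eta κ Qinv) (κ * (1 - ε) / gaussPDF (Qinv ε) - 1 + κ * Qinv ε) ε := by
  have hQ := hasDerivAt_of_leftInverse_gaussQ hleft hright hε
  exact ((hQ.const_mul κ).const_sub 1).mul ((hasDerivAt_id ε).const_sub 1) |>.congr_deriv
    (by simp only [id]; field_simp; ring)

lemma hasDerivAt_deriv_eta (hleft : ∀ x, Qinv (gaussQ x) = x)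
    (hright : ∀ ε ∈ Ioo (0 : ℝ) 1, gaussQ (Qinv ε) = ε) (κ : ℝ) (hε : ε ∈ Ioo (0 : ℝ) 1) :
    HasDerivAt (fun ε => κ * (1 - ε) / gaussPDF (Qinv ε) - 1 + κ * Qinv ε)
      (-κ * (Qinv ε * (1 - ε) + 2 * gaussPDF (Qinv ε)) / gaussPDF (Qinv ε) ^ 2) ε := by
  have hφ := (gaussPDF_pos (Qinv ε)).ne'
  have hQ := hasDerivAt_of_leftInverse_gaussQ hleft hright hε
  have hφQ := hasDerivAt_gaussPDF_comp_of_leftInverse_gaussQ hleft hright hε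
  exact ((((hasDerivAt_id ε).const_sub 1).const_mul κ).div hφQ hφ |>.sub_const 1).add
    (hQ.const_mul κ) |>.congr_deriv (by simp only [id]; field_simp; ring)

lemma deriv_deriv_eta_neg (hleft : ∀ x, Qinv (gaussQ x) = x)
    (hright : ∀ ε ∈ Ioo (0 : ℝ) 1, gaussQ (Qinv ε) = ε) {κ : ℝ} (hκ : 0 < κ)
    (hε : ε ∈ Ioo (0 : ℝ) 1) : deriv (deriv (eta κ Qinv)) ε < 0 := by
  have hderiv : deriv (eta κ Qinv) =ᶠ[𝓝 ε]
      fun ε => κ * (1 - ε) / gaussPDF (Qinv ε) - 1 + κ * Qinv ε :=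
    eventually_of_mem (isOpen_Ioo.mem_nhds hε) fun y hy =>
      (hasDerivAt_eta hleft hright κ hy).deriv
  rw [hderiv.deriv_eq, (hasDerivAt_deriv_eta hleft hright κ hε).deriv]
  have hkey : 0 < Qinv ε * (1 - ε) + 2 * gaussPDF (Qinv ε) := by
    have := mul_one_sub_gaussQ_add_gaussPDF_nonneg (Qinv ε)
    rw [hright ε hε] at this
    linarith [gaussPDF_pos (Qinv ε)]
  have := gaussPDF_pos (Qinv ε)
  exact div_neg_of_neg_of_pos (by nlinarith) (by positivity)

end LeftInverse

theorem stmt2 (Qinv : ℝ → ℝ)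
    (hleft : ∀ x : ℝ, Qinv (gaussQ x) = x)
    (hright : ∀ ε ∈ Set.Ioo (0 : ℝ) 1, gaussQ (Qinv ε) = ε)
    (κ : ℝ) (hκ : κ ∈ Set.Ioo (0 : ℝ) 1) :
    StrictConcaveOn ℝ (Set.Ioo (0 : ℝ) 1) (fun ε => (1 - κ * Qinv ε) * (1 - ε)) ∧
    ∀ ε ∈ Set.Ioo (0 : ℝ) 1,
      deriv (deriv (fun ε => (1 - κ * Qinv ε) * (1 - ε))) ε < 0 := by
  have hneg : ∀ ε ∈ Ioo (0 : ℝ) 1, deriv (deriv (eta κ Qinv)) ε < 0 :=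
    fun ε hε => deriv_deriv_eta_neg hleft hright hκ.1 hε
  refine ⟨strictConcaveOn_of_deriv2_neg (convex_Ioo 0 1) ?_ ?_, hneg⟩
  · exact fun ε hε => (hasDerivAt_eta hleft hright κ hε).continuousAt.continuousWithinAt
  · rw [interior_Ioo]
    exact hneg
end

section
/- The expected number of ARQ rounds E[X] given by the formula E[X] = Σ_{i=1}^{d−1} i·(ε^i(1−ε_fb)^{i−1}ε_fb + Σ_{j=1}^{i} ε^{j−1}(1−ε_fb)^j(1−ε)ε_fb^{i−j}) + d·(ε^{d−1}(1−ε_fb)^{d−1} + Σ_{j=1}^{d−1} ε^{j−1}(1−ε_fb)^{j−1}(1−ε)ε_fb^{d−j}) defines a probability distribution: the total probability mass (the same expression with the factors i and d removed) sums to 1, for any ε, ε_fb ∈ [0,1] and integer d ≥ 1. -/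
/-! The mass `reachMass d` of the final (`d`-th) term is the probability of entering round `d`. Entering
round `n` splits into stopping there (mass `stopMass n`) or entering round `n + 1`: the two sums
combine term by term with the factor `(1 - εfb) + εfb = 1`. Telescoping from `reachMass 1 = 1`
gives total mass one, as a polynomial identity in `ε` and `εfb`. -/

open Finset

section ArqMass

variable {R : Type*} [CommRing R] (ε q : R)

def reachMass (d : ℕ) : R :=
  ε ^ (d - 1) * (1 - q) ^ (d - 1) +
    ∑ j ∈ Icc 1 (d - 1), ε ^ (j - 1) * (1 - q) ^ (j - 1) * (1 - ε) * q ^ (d - j)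

def stopMass (i : ℕ) : R :=
  ε ^ i * (1 - q) ^ (i - 1) * q +
    ∑ j ∈ Icc 1 i, ε ^ (j - 1) * (1 - q) ^ j * (1 - ε) * q ^ (i - j)

theorem reachMass_one : reachMass ε q 1 = 1 := by
  simp [reachMass]

theorem reachMass_succ_eq_stopMass_add (n : ℕ) :
    reachMass ε q (n + 1) = stopMass ε q (n + 1) + reachMass ε q (n + 2) := by
  set f : ℕ → R := fun j ↦ ε ^ (j - 1) * (1 - q) ^ (j - 1) * (1 - ε) * q ^ (n + 1 - j)
  have hsplit : ∑ j ∈ Icc 1 (n + 1), ε ^ (j - 1) * (1 - q) ^ j * (1 - ε) * q ^ (n + 1 - j) +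
      ∑ j ∈ Icc 1 (n + 1), ε ^ (j - 1) * (1 - q) ^ (j - 1) * (1 - ε) * q ^ (n + 2 - j) =
      ∑ j ∈ Icc 1 (n + 1), f j := by
    rw [← sum_add_distrib]
    refine sum_congr rfl fun j hj ↦ ?_
    obtain ⟨k, rfl⟩ : ∃ k, j = k + 1 := ⟨j - 1, by grind⟩
    obtain ⟨m, hm⟩ : ∃ m, n + 1 - (k + 1) = m ∧ n + 2 - (k + 1) = m + 1 :=
      ⟨n - k, by grind⟩
    simp only [f, hm, Nat.add_sub_cancel, pow_succ]
    ring
  have hlast : f (n + 1) = ε ^ n * (1 - q) ^ n * (1 - ε) := by simp [f]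
  simp only [reachMass, stopMass, Nat.add_sub_cancel, show n + 2 - 1 = n + 1 from rfl]
  rw [sum_Icc_succ_top (by omega : 1 ≤ n + 1) f, hlast] at hsplit
  linear_combination -hsplit

theorem sum_stopMass_add_reachMass (n : ℕ) :
    ∑ i ∈ Icc 1 n, stopMass ε q i + reachMass ε q (n + 1) = 1 := by
  induction n with
  | zero => simp [reachMass_one]
  | succ n ih =>
    rw [sum_Icc_succ_top (by omega), add_assoc, ← reachMass_succ_eq_stopMass_add, ih]

end ArqMass

theorem stmt18_general (ε εfb : ℝ)
    (d : ℕ) (hd : 1 ≤ d) :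
    (∑ i ∈ Finset.Icc 1 (d - 1),
        (ε ^ i * (1 - εfb) ^ (i - 1) * εfb +
          ∑ j ∈ Finset.Icc 1 i, ε ^ (j - 1) * (1 - εfb) ^ j * (1 - ε) * εfb ^ (i - j))) +
      (ε ^ (d - 1) * (1 - εfb) ^ (d - 1) +
        ∑ j ∈ Finset.Icc 1 (d - 1),
          ε ^ (j - 1) * (1 - εfb) ^ (j - 1) * (1 - ε) * εfb ^ (d - j)) = 1 := by
  obtain ⟨n, rfl⟩ : ∃ n, d = n + 1 := ⟨d - 1, by omega⟩
  exact sum_stopMass_add_reachMass ε εfb n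

theorem stmt18 (ε εfb : ℝ) (hε : ε ∈ Set.Icc (0 : ℝ) 1) (hεfb : εfb ∈ Set.Icc (0 : ℝ) 1)
    (d : ℕ) (hd : 1 ≤ d) :
    (∑ i ∈ Finset.Icc 1 (d - 1),
        (ε ^ i * (1 - εfb) ^ (i - 1) * εfb +
          ∑ j ∈ Finset.Icc 1 i, ε ^ (j - 1) * (1 - εfb) ^ j * (1 - ε) * εfb ^ (i - j))) +
      (ε ^ (d - 1) * (1 - εfb) ^ (d - 1) +
        ∑ j ∈ Finset.Icc 1 (d - 1),
          ε ^ (j - 1) * (1 - εfb) ^ (j - 1) * (1 - ε) * εfb ^ (d - j)) = 1 :=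
  stmt18_general ε εfb d hd
end
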